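/- arXiv:2303.11576 — 4 statements merged into one kernel-verified Lean document; each statement's English description precedes it below -/
import Mathlib

section
/- Suppose Assumptions 4.8 and 4.9 hold: there is y* ∈ Y with β(y*) := max_{i∈I} ∫₀^∞ e^{−λ̲ t} ρ(S_i(t,y*),y*) dt < ∞, and there are constants L > 0 and α < λ̲ with ρ(S_i(t,u),S_i(t,v)) ≤ L e^{α t} ρ(u,v) for all u,v ∈ Y, i ∈ I, t ≥ 0. Let V(y,i) := ρ(y,y*). Then for every (y,i) ∈ X one has ∫₀^∞ e^{−Λ(y,i,t)} ρ(S_i(t,y),y*) dt ≤ (L/(λ̲ − α)) V(y,i) + β(y*). Consequently, for every probability measure μ on X with ∫_X V dμ < ∞, the measure μG̃ defined by μG̃(A) := ∫_X G̃(x,A) μ(dx) satisfies ∫_X V d(μG̃) ≤ (L/(λ̲ − α)) ∫_X V dμ + β(y*) < ∞; in particular the normalized measure μG̃ / μG̃(X) has finite first moment with respect to V. -/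
open MeasureTheory ProbabilityTheory Real Set Filter Topology

noncomputable section

/-- The operator `f ↦ (x ↦ ∫ f dκ(x))` iterated `n` times. -/
def kernelOpIter {Z : Type*} [MeasurableSpace Z] (κ : Kernel Z Z) :
    ℕ → (Z → ℝ) → Z → ℝ
  | 0, f => f
  | n + 1, f => fun z => ∫ w, kernelOpIter κ n f w ∂(κ z)

/-- The `n`-fold iterate of a kernel (`n = 0` giving the identity kernel). -/
def kIter {Z : Type*} [MeasurableSpace Z] (κ : Kernel Z Z) : ℕ → Kernel Z Z
  | 0 => Kernel.id
  | n + 1 => κ ∘ₖ kIter κ n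

/-- `Λ(y,i,t) = ∫₀ᵗ λ(S_i(h,y)) dh`. -/
def cumInt {Y I : Type*} (S : I → ℝ → Y → Y) (lam : Y → ℝ) (y : Y) (i : I) (t : ℝ) : ℝ :=
  ∫ h in (0:ℝ)..t, lam (S i h y)

/-- `G((y,i),A) = ∫₀^∞ λ(S_i(t,y)) e^{−Λ(y,i,t)} 1_A(S_i(t,y),i) dt`. -/
def Gker {Y I : Type*} (S : I → ℝ → Y → Y) (lam : Y → ℝ)
    (x : Y × I) (A : Set (Y × I)) : ℝ :=
  ∫ t in Ioi (0:ℝ), lam (S x.2 t x.1) * exp (-(cumInt S lam x.1 x.2 t)) *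
    A.indicator (fun _ => (1:ℝ)) (S x.2 t x.1, x.2)

/-- `G̃((y,i),A) = ∫₀^∞ e^{−Λ(y,i,t)} 1_A(S_i(t,y),i) dt`. -/
def Gtil {Y I : Type*} (S : I → ℝ → Y → Y) (lam : Y → ℝ)
    (x : Y × I) (A : Set (Y × I)) : ℝ :=
  ∫ t in Ioi (0:ℝ), exp (-(cumInt S lam x.1 x.2 t)) *
    A.indicator (fun _ => (1:ℝ)) (S x.2 t x.1, x.2)

/-- `W((y,i),A) = ∫_Y Σ_j π_{ij}(u) 1_A(u,j) J(y,du)`. -/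
def Wker {Y I : Type*} [MeasurableSpace Y] [Fintype I]
    (pm : I → I → Y → ℝ) (J : Kernel Y Y) (x : Y × I) (A : Set (Y × I)) : ℝ :=
  ∫ u, ∑ j, pm x.2 j u * A.indicator (fun _ => (1:ℝ)) (u, j) ∂(J x.1)

/-- `W̃((y,i),A) = λ(y)·W((y,i),A)`. -/
def Wtil {Y I : Type*} [MeasurableSpace Y] [Fintype I] (lam : Y → ℝ)
    (pm : I → I → Y → ℝ) (J : Kernel Y Y) (x : Y × I) (A : Set (Y × I)) : ℝ :=
  lam x.1 * Wker pm J x A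

/-- `P((y,i),A) = ∫₀^∞ λ(S_i(t,y)) e^{−Λ(y,i,t)} W((S_i(t,y),i),A) dt`. -/
def Pker {Y I : Type*} [MeasurableSpace Y] [Fintype I] (S : I → ℝ → Y → Y) (lam : Y → ℝ)
    (pm : I → I → Y → ℝ) (J : Kernel Y Y) (x : Y × I) (A : Set (Y × I)) : ℝ :=
  ∫ t in Ioi (0:ℝ), lam (S x.2 t x.1) * exp (-(cumInt S lam x.1 x.2 t)) *
    Wker pm J (S x.2 t x.1, x.2) A

/-- `P_T f(x) = Σ_{n=0}^∞ P̄ⁿ(g_T · (P̄ h_T))((x,0))`. -/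
def PTf {Y I : Type*} [MeasurableSpace Y] [MeasurableSpace I] (S : I → ℝ → Y → Y)
    (Pbar : Kernel (Y × I × ℝ) (Y × I × ℝ)) (f : Y × I → ℝ) (T : ℝ) (x : Y × I) : ℝ :=
  ∑' n : ℕ, kernelOpIter Pbar n
    (fun z => (Icc (0:ℝ) T).indicator (fun _ => (1:ℝ)) z.2.2 *
        f (S z.2.1 (T - z.2.2) z.1, z.2.1) *
        ∫ w, (Ioi T).indicator (fun _ => (1:ℝ)) w.2.2 ∂(Pbar z))
    (x.1, x.2, 0)

/-- `ψ_f((y,i),t,T)`. -/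
def psiF {Y I : Type*} [MeasurableSpace Y] [Fintype I] (S : I → ℝ → Y → Y) (lam : Y → ℝ)
    (pm : I → I → Y → ℝ) (J : Kernel Y Y) (f : Y × I → ℝ) (x : Y × I) (t T : ℝ) : ℝ :=
  lam (S x.2 t x.1) * exp (-(cumInt S lam x.1 x.2 t)) *
    ∫ u, ∑ j, pm x.2 j u * exp (-(cumInt S lam u j (T - t))) * f (S j (T - t) u, j)
      ∂(J (S x.2 t x.1))

/-- The operator `G` acting on functions. -/
def Gop {Y I : Type*} (S : I → ℝ → Y → Y) (lam : Y → ℝ) (f : Y × I → ℝ) (x : Y × I) : ℝ :=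
  ∫ t in Ioi (0:ℝ), lam (S x.2 t x.1) * exp (-(cumInt S lam x.1 x.2 t)) * f (S x.2 t x.1, x.2)

/-- The operator `W` acting on functions. -/
def Wop {Y I : Type*} [MeasurableSpace Y] [Fintype I]
    (pm : I → I → Y → ℝ) (J : Kernel Y Y) (f : Y × I → ℝ) (x : Y × I) : ℝ :=
  ∫ u, ∑ j, pm x.2 j u * f (u, j) ∂(J x.1)

/-- Invariance of a measure for the semigroup `{P_T}`. -/
def isInvariantSemigroup {Y I : Type*} [MeasurableSpace Y] [MeasurableSpace I]
    (S : I → ℝ → Y → Y) (Pbar : Kernel (Y × I × ℝ) (Y × I × ℝ))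
    (μ : Measure (Y × I)) : Prop :=
  ∀ T ≥ (0:ℝ), ∀ A : Set (Y × I), MeasurableSet A →
    ∫ x, PTf S Pbar (A.indicator fun _ => (1:ℝ)) T x ∂μ = (μ A).toReal

/-- Invariance of a measure for the kernel `P`. -/
def isInvariantP {Y I : Type*} [MeasurableSpace Y] [MeasurableSpace I] [Fintype I] (S : I → ℝ → Y → Y)
    (lam : Y → ℝ) (pm : I → I → Y → ℝ) (J : Kernel Y Y) (μ : Measure (Y × I)) : Prop :=
  ∀ A : Set (Y × I), MeasurableSet A → ∫ x, Pker S lam pm J x A ∂μ = (μ A).toReal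


/-!
Since `Λ(y,i,t) ≥ λ̲ t`, the triangle inequality through `S_i(t,y*)` and the growth bound give
`e^{-Λ(y,i,t)} ρ(S_i(t,y),y*) ≤ L ρ(y,y*) e^{-(λ̲-α)t} + e^{-λ̲ t} ρ(S_i(t,y*),y*)`, and integrating
over `t > 0` yields the pointwise bound. For the measure statement, `G̃(x,·)` is the push-forward of
`e^{-Λ(x,t)} dt` on `(0,∞)` along the trajectory; this is a measurable kernel of mass at most
`1/λ̲`, so the hypothesis on `ν` says that `ν` is `μ` bound with it, and `∫ V dν` is the
`μ`-integral of the pointwise bound.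
-/

open scoped ENNReal

section ExponentialIntegrals

theorem integrableOn_exp_neg_mul_Ioi_zero {b : ℝ} (hb : 0 < b) :
    IntegrableOn (fun t => exp (-(b * t))) (Ioi 0) := by
  simpa only [neg_mul] using integrableOn_exp_mul_Ioi (neg_neg_of_pos hb) 0

theorem integral_exp_neg_mul_Ioi_zero {b : ℝ} (hb : 0 < b) :
    ∫ t in Ioi (0:ℝ), exp (-(b * t)) = b⁻¹ := by
  simp only [← neg_mul]
  rw [integral_exp_mul_Ioi (neg_neg_of_pos hb)]
  simp

theorem integrableOn_const_mul_exp_neg_mul_add {b : ℝ} (hb : 0 < b) (c : ℝ) {g : ℝ → ℝ}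
    (hg : IntegrableOn g (Ioi 0)) :
    IntegrableOn (fun t => c * exp (-(b * t)) + g t) (Ioi 0) :=
  ((integrableOn_exp_neg_mul_Ioi_zero hb).const_mul c).add hg

theorem integral_const_mul_exp_neg_mul_add {b : ℝ} (hb : 0 < b) (c : ℝ) {g : ℝ → ℝ}
    (hg : IntegrableOn g (Ioi 0)) :
    ∫ t in Ioi (0:ℝ), (c * exp (-(b * t)) + g t) = c / b + ∫ t in Ioi 0, g t := by
  rw [integral_add ((integrableOn_exp_neg_mul_Ioi_zero hb).const_mul c) hg, integral_const_mul,
    integral_exp_neg_mul_Ioi_zero hb, div_eq_mul_inv]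

end ExponentialIntegrals

section WeightedPushforward

variable {X T Z : Type*} [MeasurableSpace X] [MeasurableSpace T] [MeasurableSpace Z]

def weightedPushforward (ρ : Measure T) (F : X → T → Z) (w : X → T → ℝ≥0∞) (x : X) :
    Measure Z :=
  (ρ.withDensity (w x)).map (F x)

variable {ρ : Measure T} {F : X → T → Z} {w : X → T → ℝ≥0∞}

theorem lintegral_weightedPushforward (hF : Measurable (Function.uncurry F))
    (hw : Measurable (Function.uncurry w)) {f : Z → ℝ≥0∞} (hf : Measurable f) (x : X) :
    ∫⁻ z, f z ∂weightedPushforward ρ F w x = ∫⁻ t, w x t * f (F x t) ∂ρ := by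
  rw [weightedPushforward, lintegral_map hf hF.of_uncurry_left]
  exact lintegral_withDensity_eq_lintegral_mul _ hw.of_uncurry_left (hf.comp hF.of_uncurry_left)

theorem measurable_weightedPushforward [SFinite ρ] (hF : Measurable (Function.uncurry F))
    (hw : Measurable (Function.uncurry w)) : Measurable (weightedPushforward ρ F w) := by
  refine Measure.measurable_of_measurable_coe _ fun A hA => ?_
  simp_rw [← lintegral_indicator_one hA, lintegral_weightedPushforward hF hw
    (measurable_one.indicator hA)]
  exact (hw.mul ((measurable_one.indicator hA).comp hF)).lintegral_prod_right'

end WeightedPushforward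

section Bind

variable {X Z : Type*} [MeasurableSpace X] [MeasurableSpace Z] {μ : Measure X}
  {κ : X → Measure Z}

theorem eq_bind_of_forall_toReal_apply_eq [IsFiniteMeasure μ] (hκ : Measurable κ) {C : ℝ≥0∞}
    (hC : C ≠ ∞) (hκC : ∀ x, κ x univ ≤ C) {ν : Measure Z} [IsFiniteMeasure ν]
    (hν : ∀ A, MeasurableSet A → (ν A).toReal = ∫ x, (κ x A).toReal ∂μ) :
    ν = μ.bind κ := by
  have hκA : ∀ x A, κ x A < ∞ := fun x A =>
    ((measure_mono (subset_univ A)).trans (hκC x)).trans_lt hC.lt_top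
  ext A hA
  rw [Measure.bind_apply hA hκ.aemeasurable, ← ENNReal.toReal_eq_toReal_iff' (measure_ne_top ν A),
    hν A hA, integral_toReal (f := fun x => κ x A)
      ((Measure.measurable_coe hA).comp hκ).aemeasurable (ae_of_all _ fun x => hκA x A)]
  refine ne_top_of_le_ne_top (ENNReal.mul_ne_top hC (measure_ne_top μ univ)) ?_
  rw [← lintegral_const]
  exact lintegral_mono fun x => (measure_mono (subset_univ A)).trans (hκC x)

theorem integrable_and_integral_le_of_lintegral_le (hκ : Measurable κ) {V : Z → ℝ}
    (hV : Measurable V) (hV0 : ∀ z, 0 ≤ V z) {g : X → ℝ} (hg : Integrable g μ)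
    (hg0 : 0 ≤ᵐ[μ] g) (hκV : ∀ x, ∫⁻ z, ENNReal.ofReal (V z) ∂κ x ≤ ENNReal.ofReal (g x)) :
    Integrable V (μ.bind κ) ∧ ∫ z, V z ∂μ.bind κ ≤ ∫ x, g x ∂μ := by
  have hlint : ∫⁻ z, ENNReal.ofReal (V z) ∂μ.bind κ ≤ ENNReal.ofReal (∫ x, g x ∂μ) := by
    rw [Measure.lintegral_bind hκ.aemeasurable hV.ennreal_ofReal.aemeasurable,
      ofReal_integral_eq_lintegral_ofReal hg hg0]
    exact lintegral_mono hκV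
  refine ⟨⟨hV.aestronglyMeasurable, ?_⟩, ?_⟩
  · rw [hasFiniteIntegral_iff_ofReal (ae_of_all _ hV0)]
    exact hlint.trans_lt ENNReal.ofReal_lt_top
  · rw [integral_eq_lintegral_of_nonneg_ae (ae_of_all _ hV0) hV.aestronglyMeasurable]
    exact ENNReal.toReal_le_of_le_ofReal (integral_nonneg_of_ae hg0) hlint

theorem Integrable.inv_measure_univ_smul {E : Type*} [NormedAddCommGroup E] {ν : Measure Z}
    {f : Z → E} (hf : Integrable f ν) : Integrable f ((ν univ)⁻¹ • ν) := by
  rcases eq_or_ne ν 0 with rfl | hν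
  · simp
  · exact hf.smul_measure (ENNReal.inv_ne_top.2 (Measure.measure_univ_ne_zero.2 hν))

end Bind

section Semiflow

variable {Y I : Type*} {S : I → ℝ → Y → Y} {lam : Y → ℝ} {i : I} {y : Y} {t : ℝ}

/-- Freezing the flow at time `0` for negative times makes it jointly continuous on `ℝ × Y`,
as the measurability arguments need, without changing anything for `t ≥ 0`. -/
def clampFlow (S : I → ℝ → Y → Y) : I → ℝ → Y → Y := fun i t y => S i (max t 0) y

theorem clampFlow_of_nonneg (ht : 0 ≤ t) : clampFlow S i t y = S i t y := by
  simp only [clampFlow, max_eq_left ht]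

theorem cumInt_clampFlow (ht : 0 ≤ t) : cumInt (clampFlow S) lam y i t = cumInt S lam y i t :=
  intervalIntegral.integral_congr fun h hh => by
    rw [uIcc_of_le ht] at hh
    simp only [clampFlow_of_nonneg hh.1]

theorem Gtil_clampFlow : Gtil (clampFlow S) lam = Gtil S lam := by
  ext x A
  refine setIntegral_congr_fun measurableSet_Ioi fun t ht => ?_
  simp only [cumInt_clampFlow (le_of_lt ht), clampFlow_of_nonneg (le_of_lt ht)]

variable [TopologicalSpace Y]

theorem continuous_clampFlow
    (hS : ContinuousOn (fun p : ℝ × Y => S i p.1 p.2) (Ici 0 ×ˢ univ)) :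
    Continuous fun p : ℝ × Y => clampFlow S i p.1 p.2 :=
  hS.comp_continuous ((continuous_fst.max continuous_const).prodMk continuous_snd)
    fun p => ⟨mem_Ici.2 (le_max_right p.1 0), mem_univ _⟩

theorem continuous_cumInt (hS : Continuous fun p : ℝ × Y => S i p.1 p.2) (hlam : Continuous lam) :
    Continuous fun p : Y × ℝ => cumInt S lam p.1 i p.2 :=
  intervalIntegral.continuous_parametric_intervalIntegral_of_continuous
    (f := fun p h => lam (S i h p.1))
    (hlam.comp (hS.comp (continuous_snd.prodMk continuous_fst.fst))) continuous_snd

theorem mul_le_cumInt (hS : ContinuousOn (fun p : ℝ × Y => S i p.1 p.2) (Ici 0 ×ˢ univ))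
    (hlam : Continuous lam) {lmin : ℝ} (hlmin : ∀ y, lmin ≤ lam y) (ht : 0 ≤ t) :
    lmin * t ≤ cumInt S lam y i t := by
  rw [← cumInt_clampFlow ht]
  calc lmin * t = ∫ _ in (0:ℝ)..t, lmin := by simp [mul_comm]
    _ ≤ _ := intervalIntegral.integral_mono_on ht intervalIntegrable_const
      ((hlam.comp ((continuous_clampFlow hS).comp
        (continuous_id.prodMk continuous_const))).intervalIntegrable _ _) fun _ _ => hlmin _

end Semiflow

section MomentEstimate

variable {Y I : Type*} [PseudoMetricSpace Y] {S : I → ℝ → Y → Y} {lam : Y → ℝ} {i : I}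
  {lmin L α : ℝ} {ystar y : Y}

theorem exp_neg_cumInt_mul_dist_le
    (hS : ContinuousOn (fun p : ℝ × Y => S i p.1 p.2) (Ici 0 ×ˢ univ)) (hlam : Continuous lam)
    (hlmin : ∀ y, lmin ≤ lam y)
    (hgrowth : ∀ t ≥ 0, dist (S i t y) (S i t ystar) ≤ L * exp (α * t) * dist y ystar)
    {t : ℝ} (ht : 0 ≤ t) :
    exp (-cumInt S lam y i t) * dist (S i t y) ystar ≤
      L * dist y ystar * exp (-((lmin - α) * t)) +
        exp (-(lmin * t)) * dist (S i t ystar) ystar := by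
  have hexp : exp (-((lmin - α) * t)) = exp (-(lmin * t)) * exp (α * t) := by
    rw [← exp_add]; ring_nf
  calc exp (-cumInt S lam y i t) * dist (S i t y) ystar
      ≤ exp (-(lmin * t)) * (L * exp (α * t) * dist y ystar + dist (S i t ystar) ystar) := by
        gcongr ?_ * ?_
        · exact exp_le_exp.2 (neg_le_neg (mul_le_cumInt hS hlam hlmin ht))
        · exact (dist_triangle _ _ _).trans (add_le_add_left (hgrowth t ht) _)
    _ = _ := by rw [hexp]; ring

theorem integral_exp_neg_cumInt_mul_dist_le
    (hS : ContinuousOn (fun p : ℝ × Y => S i p.1 p.2) (Ici 0 ×ˢ univ)) (hlam : Continuous lam)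
    (hlmin : ∀ y, lmin ≤ lam y) (hα : α < lmin)
    (hgrowth : ∀ t ≥ 0, dist (S i t y) (S i t ystar) ≤ L * exp (α * t) * dist y ystar)
    (hstar : IntegrableOn (fun t => exp (-(lmin * t)) * dist (S i t ystar) ystar) (Ioi 0)) :
    ∫ t in Ioi (0:ℝ), exp (-cumInt S lam y i t) * dist (S i t y) ystar ≤
      L / (lmin - α) * dist y ystar +
        ∫ t in Ioi (0:ℝ), exp (-(lmin * t)) * dist (S i t ystar) ystar := by
  have hb : 0 < lmin - α := sub_pos.2 hα
  calc _ ≤ ∫ t in Ioi (0:ℝ), (L * dist y ystar * exp (-((lmin - α) * t)) +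
        exp (-(lmin * t)) * dist (S i t ystar) ystar) :=
        integral_mono_of_nonneg (ae_of_all _ fun t => mul_nonneg (exp_pos _).le dist_nonneg)
          (integrableOn_const_mul_exp_neg_mul_add hb _ hstar)
          (ae_restrict_of_forall_mem measurableSet_Ioi fun t ht =>
            exp_neg_cumInt_mul_dist_le hS hlam hlmin hgrowth (le_of_lt ht))
    _ = _ := by rw [integral_const_mul_exp_neg_mul_add hb _ hstar, div_mul_eq_mul_div]

theorem setLIntegral_exp_neg_cumInt_mul_dist_le
    (hS : ContinuousOn (fun p : ℝ × Y => S i p.1 p.2) (Ici 0 ×ˢ univ)) (hlam : Continuous lam)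
    (hlmin : ∀ y, lmin ≤ lam y) (hL : 0 ≤ L) (hα : α < lmin)
    (hgrowth : ∀ t ≥ 0, dist (S i t y) (S i t ystar) ≤ L * exp (α * t) * dist y ystar)
    (hstar : IntegrableOn (fun t => exp (-(lmin * t)) * dist (S i t ystar) ystar) (Ioi 0)) :
    ∫⁻ t in Ioi (0:ℝ), ENNReal.ofReal (exp (-cumInt S lam y i t) * dist (S i t y) ystar) ≤
      ENNReal.ofReal (L / (lmin - α) * dist y ystar +
        ∫ t in Ioi (0:ℝ), exp (-(lmin * t)) * dist (S i t ystar) ystar) := by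
  have hb : 0 < lmin - α := sub_pos.2 hα
  rw [div_mul_eq_mul_div, ← integral_const_mul_exp_neg_mul_add hb _ hstar,
    ofReal_integral_eq_lintegral_ofReal
      (integrableOn_const_mul_exp_neg_mul_add hb _ hstar)
      (ae_of_all _ fun t => add_nonneg (mul_nonneg (mul_nonneg hL dist_nonneg) (exp_pos _).le)
        (mul_nonneg (exp_pos _).le dist_nonneg))]
  exact setLIntegral_mono' measurableSet_Ioi fun t ht =>
    ENNReal.ofReal_le_ofReal (exp_neg_cumInt_mul_dist_le hS hlam hlmin hgrowth (le_of_lt ht))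

end MomentEstimate

section GtilMeasure

variable {Y I : Type*} [MeasurableSpace Y] [MeasurableSpace I]

def GtilMeasure (S : I → ℝ → Y → Y) (lam : Y → ℝ) : Y × I → Measure (Y × I) :=
  weightedPushforward (volume.restrict (Ioi 0)) (fun x t => (S x.2 t x.1, x.2))
    (fun x t => ENNReal.ofReal (exp (-cumInt S lam x.1 x.2 t)))

variable [TopologicalSpace Y] [BorelSpace Y] [Countable I] [MeasurableSingletonClass I]
  {S : I → ℝ → Y → Y} {lam : Y → ℝ}

theorem measurable_flow_uncurry (hS : ∀ i, Continuous fun p : ℝ × Y => S i p.1 p.2) :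
    Measurable (Function.uncurry fun (x : Y × I) t => (S x.2 t x.1, x.2)) := by
  have h : Measurable fun q : (ℝ × Y) × I => (S q.2 q.1.1 q.1.2, q.2) :=
    measurable_from_prod_countable_left fun i => (hS i).measurable.prodMk measurable_const
  exact h.comp ((measurable_snd.prodMk measurable_fst.fst).prodMk measurable_fst.snd)

theorem measurable_cumInt_uncurry (hS : ∀ i, Continuous fun p : ℝ × Y => S i p.1 p.2)
    (hlam : Continuous lam) :
    Measurable (Function.uncurry fun (x : Y × I) t => cumInt S lam x.1 x.2 t) := by
  have h : Measurable fun q : (Y × ℝ) × I => cumInt S lam q.1.1 q.2 q.1.2 :=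
    measurable_from_prod_countable_left fun i => (continuous_cumInt (hS i) hlam).measurable
  exact h.comp ((measurable_fst.fst.prodMk measurable_snd).prodMk measurable_fst.snd)

theorem measurable_exp_neg_cumInt_uncurry (hS : ∀ i, Continuous fun p : ℝ × Y => S i p.1 p.2)
    (hlam : Continuous lam) :
    Measurable (Function.uncurry fun (x : Y × I) t =>
      ENNReal.ofReal (exp (-cumInt S lam x.1 x.2 t))) :=
  (measurable_cumInt_uncurry hS hlam).neg.exp.ennreal_ofReal

theorem measurable_GtilMeasure (hS : ∀ i, Continuous fun p : ℝ × Y => S i p.1 p.2)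
    (hlam : Continuous lam) : Measurable (GtilMeasure S lam) :=
  measurable_weightedPushforward (measurable_flow_uncurry hS)
    (measurable_exp_neg_cumInt_uncurry hS hlam)

theorem lintegral_GtilMeasure (hS : ∀ i, Continuous fun p : ℝ × Y => S i p.1 p.2)
    (hlam : Continuous lam) {f : Y × I → ℝ≥0∞} (hf : Measurable f) (x : Y × I) :
    ∫⁻ z, f z ∂GtilMeasure S lam x =
      ∫⁻ t in Ioi 0, ENNReal.ofReal (exp (-cumInt S lam x.1 x.2 t)) * f (S x.2 t x.1, x.2) :=
  lintegral_weightedPushforward (measurable_flow_uncurry hS)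
    (measurable_exp_neg_cumInt_uncurry hS hlam) hf x

theorem Gtil_eq_toReal_GtilMeasure (hS : ∀ i, Continuous fun p : ℝ × Y => S i p.1 p.2)
    (hlam : Continuous lam) (x : Y × I) {A : Set (Y × I)} (hA : MeasurableSet A) :
    Gtil S lam x A = (GtilMeasure S lam x A).toReal := by
  have hmeas : Measurable fun t =>
      exp (-cumInt S lam x.1 x.2 t) * A.indicator (fun _ => (1:ℝ)) (S x.2 t x.1, x.2) :=
    ((measurable_cumInt_uncurry hS hlam).of_uncurry_left.neg.exp).mul
      ((measurable_const.indicator hA).comp (measurable_flow_uncurry hS).of_uncurry_left)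
  rw [← lintegral_indicator_one hA, lintegral_GtilMeasure hS hlam (measurable_one.indicator hA),
    Gtil, integral_eq_lintegral_of_nonneg_ae (ae_of_all _ fun t => mul_nonneg (exp_pos _).le
      (indicator_nonneg (fun _ _ => zero_le_one) _)) hmeas.aestronglyMeasurable]
  congr 1
  refine lintegral_congr fun t => ?_
  rw [ENNReal.ofReal_mul (exp_pos _).le]
  congr 1
  by_cases h : (S x.2 t x.1, x.2) ∈ A <;> simp [h]

theorem GtilMeasure_univ_le (hS : ∀ i, Continuous fun p : ℝ × Y => S i p.1 p.2)
    (hlam : Continuous lam) {lmin : ℝ} (hlmin_pos : 0 < lmin) (hlmin : ∀ y, lmin ≤ lam y)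
    (x : Y × I) : GtilMeasure S lam x univ ≤ ENNReal.ofReal lmin⁻¹ := by
  rw [← lintegral_one, lintegral_GtilMeasure hS hlam measurable_const,
    ← integral_exp_neg_mul_Ioi_zero hlmin_pos, ofReal_integral_eq_lintegral_ofReal
      (integrableOn_exp_neg_mul_Ioi_zero hlmin_pos) (ae_of_all _ fun _ => (exp_pos _).le)]
  refine setLIntegral_mono' measurableSet_Ioi fun t ht => ?_
  rw [mul_one]
  exact ENNReal.ofReal_le_ofReal (exp_le_exp.2 (neg_le_neg
    (mul_le_cumInt (hS x.2).continuousOn hlam hlmin (le_of_lt ht))))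

end GtilMeasure

section ClampedGtilMeasure

variable {Y I : Type*} [PseudoMetricSpace Y] [MeasurableSpace Y] [BorelSpace Y]
  [MeasurableSpace I] [Countable I] [MeasurableSingletonClass I] {S : I → ℝ → Y → Y}
  {lam : Y → ℝ} {lmin : ℝ}

theorem eq_bind_GtilMeasure_clampFlow
    (hS : ∀ i, ContinuousOn (fun p : ℝ × Y => S i p.1 p.2) (Ici 0 ×ˢ univ))
    (hlam : Continuous lam) (hlmin_pos : 0 < lmin) (hlmin : ∀ y, lmin ≤ lam y)
    {μ : Measure (Y × I)} [IsFiniteMeasure μ] {ν : Measure (Y × I)} [IsFiniteMeasure ν]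
    (hν : ∀ A, MeasurableSet A → (ν A).toReal = ∫ x, Gtil S lam x A ∂μ) :
    ν = μ.bind (GtilMeasure (clampFlow S) lam) := by
  have hS' := fun i => continuous_clampFlow (hS i)
  refine eq_bind_of_forall_toReal_apply_eq (measurable_GtilMeasure hS' hlam)
    ENNReal.ofReal_ne_top (GtilMeasure_univ_le hS' hlam hlmin_pos hlmin) fun A hA => ?_
  simp only [hν A hA, ← Gtil_clampFlow (S := S), Gtil_eq_toReal_GtilMeasure hS' hlam _ hA]

theorem lintegral_dist_GtilMeasure_clampFlow_le
    (hS : ∀ i, ContinuousOn (fun p : ℝ × Y => S i p.1 p.2) (Ici 0 ×ˢ univ))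
    (hlam : Continuous lam) (hlmin : ∀ y, lmin ≤ lam y) {L α : ℝ}
    (hL : 0 ≤ L) (hα : α < lmin) {ystar : Y}
    (hstar : ∀ i, IntegrableOn (fun t => exp (-(lmin * t)) * dist (S i t ystar) ystar) (Ioi 0))
    (hgrowth : ∀ u v : Y, ∀ i, ∀ t ≥ 0, dist (S i t u) (S i t v) ≤ L * exp (α * t) * dist u v)
    (x : Y × I) :
    ∫⁻ z, ENNReal.ofReal (dist z.1 ystar) ∂GtilMeasure (clampFlow S) lam x ≤
      ENNReal.ofReal (L / (lmin - α) * dist x.1 ystar +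
        ∫ t in Ioi (0:ℝ), exp (-(lmin * t)) * dist (S x.2 t ystar) ystar) := by
  have hV : Measurable fun z : Y × I => dist z.1 ystar :=
    (continuous_id.dist continuous_const).measurable.comp measurable_fst
  rw [lintegral_GtilMeasure (fun i => continuous_clampFlow (hS i)) hlam hV.ennreal_ofReal]
  refine le_of_eq_of_le (setLIntegral_congr_fun measurableSet_Ioi fun t ht => ?_)
    (setLIntegral_exp_neg_cumInt_mul_dist_le (hS x.2) hlam hlmin hL hα
      (hgrowth x.1 ystar x.2) (hstar x.2))
  simp only [cumInt_clampFlow (le_of_lt ht), clampFlow_of_nonneg (le_of_lt ht),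
    ENNReal.ofReal_mul (exp_pos _).le]

end ClampedGtilMeasure

theorem Gtil_moment_bound_general
    {Y : Type*} [MetricSpace Y] [MeasurableSpace Y] [BorelSpace Y]
    {I : Type*} [Fintype I] [MeasurableSpace I] [MeasurableSingletonClass I]
    (S : I → ℝ → Y → Y)
    (hS_cont : ∀ i, ContinuousOn (fun p : ℝ × Y => S i p.1 p.2) (Ici (0:ℝ) ×ˢ (univ : Set Y)))
    (lam : Y → ℝ) (hlam_cont : Continuous lam) (lmin lmax : ℝ) (hlmin : 0 < lmin)
    (hlam_bd : ∀ y, lmin ≤ lam y ∧ lam y ≤ lmax)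
    (ystar : Y)
    (hA48 : ∀ i, IntegrableOn (fun t => exp (-(lmin * t)) * dist (S i t ystar) ystar) (Ioi 0))
    (L α : ℝ) (hL : 0 < L) (hα : α < lmin)
    (hA49 : ∀ u v : Y, ∀ i, ∀ t ≥ (0:ℝ), dist (S i t u) (S i t v) ≤ L * exp (α * t) * dist u v) :
    (∀ y i, ∫ t in Ioi (0:ℝ), exp (-(cumInt S lam y i t)) * dist (S i t y) ystar ≤
      L / (lmin - α) * dist y ystar +
        (⨆ i' : I, ∫ t in Ioi (0:ℝ), exp (-(lmin * t)) * dist (S i' t ystar) ystar)) ∧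
    ∀ μ : Measure (Y × I), IsProbabilityMeasure μ →
      Integrable (fun x : Y × I => dist x.1 ystar) μ →
      ∀ ν : Measure (Y × I), IsFiniteMeasure ν →
        (∀ A : Set (Y × I), MeasurableSet A → (ν A).toReal = ∫ x, Gtil S lam x A ∂μ) →
        Integrable (fun x : Y × I => dist x.1 ystar) ν ∧
        (∫ x : Y × I, dist x.1 ystar ∂ν ≤
          L / (lmin - α) * ∫ x : Y × I, dist x.1 ystar ∂μ +
            (⨆ i' : I, ∫ t in Ioi (0:ℝ), exp (-(lmin * t)) * dist (S i' t ystar) ystar)) ∧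
        Integrable (fun x : Y × I => dist x.1 ystar) ((ν univ)⁻¹ • ν) := by
  set β := ⨆ i' : I, ∫ t in Ioi (0:ℝ), exp (-(lmin * t)) * dist (S i' t ystar) ystar
  have hβ : ∀ i, ∫ t in Ioi (0:ℝ), exp (-(lmin * t)) * dist (S i t ystar) ystar ≤ β :=
    le_ciSup (Set.finite_range _).bddAbove
  have hβ0 : 0 ≤ β := Real.iSup_nonneg fun i =>
    setIntegral_nonneg measurableSet_Ioi fun t _ => mul_nonneg (exp_pos _).le dist_nonneg
  have hlmin' : ∀ y, lmin ≤ lam y := fun y => (hlam_bd y).1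
  refine ⟨fun y i => (integral_exp_neg_cumInt_mul_dist_le (hS_cont i) hlam_cont hlmin' hα
    (hA49 y ystar i) (hA48 i)).trans (add_le_add_right (hβ i) _), ?_⟩
  intro μ hμ hVμ ν hν hνG
  obtain rfl := eq_bind_GtilMeasure_clampFlow hS_cont hlam_cont hlmin hlmin' hνG
  have hV : Measurable fun z : Y × I => dist z.1 ystar :=
    (continuous_id.dist continuous_const).measurable.comp measurable_fst
  obtain ⟨hint, hle⟩ := integrable_and_integral_le_of_lintegral_le
    (g := fun x => L / (lmin - α) * dist x.1 ystar + β)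
    (measurable_GtilMeasure (fun i => continuous_clampFlow (hS_cont i)) hlam_cont) hV
    (fun _ => dist_nonneg) ((hVμ.const_mul _).add (integrable_const β))
    (ae_of_all _ fun x => add_nonneg (mul_nonneg (div_nonneg hL.le (sub_pos.2 hα).le)
      dist_nonneg) hβ0)
    fun x => (lintegral_dist_GtilMeasure_clampFlow_le hS_cont hlam_cont hlmin' hL.le hα hA48 hA49
      x).trans (ENNReal.ofReal_le_ofReal (add_le_add_right (hβ x.2) _))
  refine ⟨hint, hle.trans_eq ?_, Integrable.inv_measure_univ_smul hint⟩
  rw [integral_add (hVμ.const_mul _) (integrable_const β), integral_const_mul, integral_const]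
  simp

theorem Gtil_moment_bound
    {Y : Type*} [MetricSpace Y] [TopologicalSpace.SeparableSpace Y] [CompleteSpace Y]
    [MeasurableSpace Y] [BorelSpace Y]
    {I : Type*} [Fintype I] [Nonempty I] [TopologicalSpace I] [DiscreteTopology I]
    [MeasurableSpace I] [MeasurableSingletonClass I]
    (S : I → ℝ → Y → Y)
    (hS_cont : ∀ i, ContinuousOn (fun p : ℝ × Y => S i p.1 p.2) (Ici (0:ℝ) ×ˢ (univ : Set Y)))
    (hS_zero : ∀ i y, S i 0 y = y)
    (hS_add : ∀ i, ∀ s ≥ (0:ℝ), ∀ t ≥ (0:ℝ), ∀ y, S i (s + t) y = S i s (S i t y))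
    (lam : Y → ℝ) (hlam_cont : Continuous lam) (lmin lmax : ℝ) (hlmin : 0 < lmin)
    (hlam_bd : ∀ y, lmin ≤ lam y ∧ lam y ≤ lmax)
    (ystar : Y)
    (hA48 : ∀ i, IntegrableOn (fun t => exp (-(lmin * t)) * dist (S i t ystar) ystar) (Ioi 0))
    (L α : ℝ) (hL : 0 < L) (hα : α < lmin)
    (hA49 : ∀ u v : Y, ∀ i, ∀ t ≥ (0:ℝ), dist (S i t u) (S i t v) ≤ L * exp (α * t) * dist u v) :
    (∀ y i, ∫ t in Ioi (0:ℝ), exp (-(cumInt S lam y i t)) * dist (S i t y) ystar ≤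
      L / (lmin - α) * dist y ystar +
        (⨆ i' : I, ∫ t in Ioi (0:ℝ), exp (-(lmin * t)) * dist (S i' t ystar) ystar)) ∧
    ∀ μ : Measure (Y × I), IsProbabilityMeasure μ →
      Integrable (fun x : Y × I => dist x.1 ystar) μ →
      ∀ ν : Measure (Y × I), IsFiniteMeasure ν →
        (∀ A : Set (Y × I), MeasurableSet A → (ν A).toReal = ∫ x, Gtil S lam x A ∂μ) →
        Integrable (fun x : Y × I => dist x.1 ystar) ν ∧
        (∫ x : Y × I, dist x.1 ystar ∂ν ≤
          L / (lmin - α) * ∫ x : Y × I, dist x.1 ystar ∂μ +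
            (⨆ i' : I, ∫ t in Ioi (0:ℝ), exp (-(lmin * t)) * dist (S i' t ystar) ystar)) ∧
        Integrable (fun x : Y × I => dist x.1 ystar) ((ν univ)⁻¹ • ν) :=
  Gtil_moment_bound_general S hS_cont lam hlam_cont lmin lmax hlmin hlam_bd ystar hA48 L α hL hα
    hA49
end
end

section
/- If the kernel J is Feller (i.e. y ↦ ∫_Y f(u) J(y,du) is bounded continuous for every bounded continuous f : Y → ℝ), then the kernel P is Feller: for every bounded continuous f : X → ℝ, the function (y,i) ↦ ∫_X f dP((y,i),·) = ∫₀^∞ λ(S_i(t,y)) e^{−Λ(y,i,t)} ∫_Y Σ_{j∈I} π_{ij}(u) f(u,j) J(S_i(t,y),du) dt is bounded and continuous on X. -/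
open MeasureTheory ProbabilityTheory Real Set Filter Topology

noncomputable section

/-! For fixed `i` the integrand `λ(S_i(t,y)) e^{-Λ(y,i,t)} (W f)(S_i(t,y), i)` is jointly
continuous in `(t, y)` on `[0, ∞) × Y`: the Feller property of `J` makes `y ↦ (W f)(y, i)`
bounded and continuous, and `Λ` is continuous as a parametric integral of a continuous function
(after extending the semiflow to negative times by `S_i(max t 0, y)`). Since `λ̲ t ≤ Λ(y,i,t)`,
the integrand is dominated by `λ̄ ‖W f‖ e^{-λ̲ t}`, which is integrable on `(0, ∞)`; dominated
convergence gives continuity and the same bound gives boundedness. -/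

theorem continuous_max_zero_of_continuousOn {Y Z : Type*} [TopologicalSpace Y]
    [TopologicalSpace Z] {Φ : ℝ → Y → Z}
    (hΦ : ContinuousOn (fun p : ℝ × Y => Φ p.1 p.2) (Ici 0 ×ˢ univ)) :
    Continuous fun p : ℝ × Y => Φ (max p.1 0) p.2 :=
  hΦ.comp_continuous ((continuous_fst.max continuous_const).prodMk continuous_snd)
    fun _ => mk_mem_prod (mem_Ici.2 (le_max_right _ _)) (mem_univ _)

theorem exists_abs_le_of_finite {ι α : Type*} [Finite ι] {g : ι → α → ℝ}
    (h : ∀ i, ∃ M, ∀ a, |g i a| ≤ M) : ∃ M, ∀ i a, |g i a| ≤ M := by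
  choose M hM using h
  obtain ⟨B, hB⟩ := Finite.bddAbove_range M
  exact ⟨B, fun i a => (hM i a).trans (hB (mem_range_self i))⟩

theorem continuous_setIntegral_Ioi_and_bdd_of_le_exp {X : Type*} [TopologicalSpace X]
    [FirstCountableTopology X] {F : X → ℝ → ℝ} {C c : ℝ} (hc : 0 < c)
    (hF_t : ∀ x, ContinuousOn (F x) (Ioi 0)) (hF_x : ∀ t > 0, Continuous fun x => F x t)
    (hF_le : ∀ x, ∀ t > 0, |F x t| ≤ C * exp (-c * t)) :
    Continuous (fun x => ∫ t in Ioi 0, F x t) ∧ ∃ M, ∀ x, |∫ t in Ioi 0, F x t| ≤ M := by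
  have hbound : IntegrableOn (fun t => C * exp (-c * t)) (Ioi 0) :=
    (exp_neg_integrableOn_Ioi 0 hc).const_mul C
  have hF_le_ae : ∀ x, ∀ᵐ t ∂volume.restrict (Ioi 0), ‖F x t‖ ≤ C * exp (-c * t) :=
    fun x => (ae_restrict_iff' measurableSet_Ioi).2 (ae_of_all _ (hF_le x))
  refine ⟨continuous_of_dominated (fun x => (hF_t x).aestronglyMeasurable measurableSet_Ioi)
    hF_le_ae hbound ((ae_restrict_iff' measurableSet_Ioi).2 (ae_of_all _ hF_x)), ?_⟩
  exact ⟨∫ t in Ioi 0, C * exp (-c * t), fun x => norm_integral_le_of_norm_le hbound (hF_le_ae x)⟩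

section Hazard

variable {Y I : Type*} {S : I → ℝ → Y → Y} {lam : Y → ℝ} {i : I}

theorem cumInt_eq_integral_max_zero {y : Y} {t : ℝ} (ht : 0 ≤ t) :
    cumInt S lam y i t = ∫ h in (0:ℝ)..t, lam (S i (max h 0) y) :=
  intervalIntegral.integral_congr fun h hh => by
    rw [uIcc_of_le ht] at hh
    rw [max_eq_left hh.1]

variable [TopologicalSpace Y] (hlam : Continuous lam)
    (hS : ContinuousOn (fun p : ℝ × Y => S i p.1 p.2) (Ici 0 ×ˢ univ))
include hlam hS

theorem continuousOn_cumInt :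
    ContinuousOn (fun p : ℝ × Y => cumInt S lam p.2 i p.1) (Ici 0 ×ˢ univ) := by
  have hS' := continuous_max_zero_of_continuousOn hS
  have : Continuous fun p : ℝ × Y => ∫ h in (0:ℝ)..p.1, lam (S i (max h 0) p.2) :=
    intervalIntegral.continuous_parametric_intervalIntegral_of_continuous
      (f := fun p h => lam (S i (max h 0) p.2))
      (hlam.comp (hS'.comp (continuous_snd.prodMk (continuous_snd.comp continuous_fst))))
      continuous_fst
  exact this.continuousOn.congr fun p hp => cumInt_eq_integral_max_zero hp.1

theorem mul_le_cumInt_s6 {lmin : ℝ} (hmin : ∀ y, lmin ≤ lam y) (y : Y) {t : ℝ} (ht : 0 ≤ t) :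
    lmin * t ≤ cumInt S lam y i t := by
  have hcont : Continuous fun h => lam (S i (max h 0) y) :=
    hlam.comp ((continuous_max_zero_of_continuousOn hS).comp (.prodMk_left y))
  rw [cumInt_eq_integral_max_zero ht]
  simpa [mul_comm] using intervalIntegral.integral_mono_on ht
    (intervalIntegrable_const (μ := volume)) (hcont.intervalIntegrable 0 t) fun h _ => hmin _

theorem continuousOn_hazardIntegrand {w : Y → ℝ} (hw : Continuous w) :
    ContinuousOn (fun p : ℝ × Y =>
      lam (S i p.1 p.2) * exp (-cumInt S lam p.2 i p.1) * w (S i p.1 p.2)) (Ici 0 ×ˢ univ) :=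
  ((hlam.comp_continuousOn hS).mul (continuousOn_cumInt hlam hS).neg.rexp).mul
    (hw.comp_continuousOn hS)

theorem abs_hazardIntegrand_le {lmin lmax M : ℝ} (hlmin : 0 ≤ lmin)
    (hlam_bd : ∀ y, lmin ≤ lam y ∧ lam y ≤ lmax) {w : Y → ℝ} (hw : ∀ u, |w u| ≤ M)
    (y : Y) {t : ℝ} (ht : 0 ≤ t) :
    |lam (S i t y) * exp (-cumInt S lam y i t) * w (S i t y)| ≤ lmax * M * exp (-lmin * t) := by
  have hlam_nonneg : 0 ≤ lam (S i t y) := hlmin.trans (hlam_bd _).1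
  have hexp : exp (-cumInt S lam y i t) ≤ exp (-lmin * t) := by
    rw [exp_le_exp, neg_mul, neg_le_neg_iff]
    exact mul_le_cumInt_s6 hlam hS (fun y => (hlam_bd y).1) y ht
  have hlmax : 0 ≤ lmax := hlam_nonneg.trans (hlam_bd _).2
  have hM : 0 ≤ M := (abs_nonneg _).trans (hw y)
  calc _ = lam (S i t y) * |w (S i t y)| * exp (-cumInt S lam y i t) := by
        rw [abs_mul, abs_mul, abs_of_nonneg hlam_nonneg, abs_of_pos (exp_pos _), mul_right_comm]
    _ ≤ lmax * M * exp (-lmin * t) := by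
        gcongr
        · exact (hlam_bd _).2
        · exact hw _

end Hazard

theorem continuous_and_bdd_Wop_slice {Y I : Type*} [TopologicalSpace Y] [MeasurableSpace Y]
    [Fintype I] [TopologicalSpace I] {pm : I → I → Y → ℝ} {J : Kernel Y Y}
    (hJ : ∀ f : Y → ℝ, Continuous f → (∃ M, ∀ y, |f y| ≤ M) →
      Continuous (fun y => ∫ u, f u ∂(J y)) ∧ ∃ M, ∀ y, |∫ u, f u ∂(J y)| ≤ M)
    (hpm_cont : ∀ i j, Continuous (pm i j)) (hpm_mem : ∀ i j y, pm i j y ∈ Icc (0:ℝ) 1)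
    {f : Y × I → ℝ} (hf : Continuous f) {M : ℝ} (hM : ∀ x, |f x| ≤ M) (i : I) :
    Continuous (fun u => Wop pm J f (u, i)) ∧ ∃ M, ∀ u, |Wop pm J f (u, i)| ≤ M := by
  refine hJ (fun u => ∑ j, pm i j u * f (u, j)) (continuous_finsetSum _ fun j _ =>
    (hpm_cont i j).mul (hf.comp (.prodMk_left j))) ⟨∑ _ : I, M, fun u => ?_⟩
  refine (Finset.abs_sum_le_sum_abs _ _).trans (Finset.sum_le_sum fun j _ => ?_)
  rw [abs_mul, abs_of_nonneg (hpm_mem i j u).1]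
  exact mul_le_of_le_one_left (abs_nonneg _) (hpm_mem i j u).2 |>.trans (hM _)

theorem Pker_feller_general
    {Y : Type*} [MetricSpace Y]
    [MeasurableSpace Y]
    {I : Type*} [Fintype I] [TopologicalSpace I] [DiscreteTopology I]
    (S : I → ℝ → Y → Y)
    (hS_cont : ∀ i, ContinuousOn (fun p : ℝ × Y => S i p.1 p.2) (Ici (0:ℝ) ×ˢ (univ : Set Y)))
    (lam : Y → ℝ) (hlam_cont : Continuous lam) (lmin lmax : ℝ) (hlmin : 0 < lmin)
    (hlam_bd : ∀ y, lmin ≤ lam y ∧ lam y ≤ lmax)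
    (pm : I → I → Y → ℝ) (hpm_cont : ∀ i j, Continuous (pm i j))
    (hpm_mem : ∀ i j y, pm i j y ∈ Icc (0:ℝ) 1)
    (J : Kernel Y Y)
    (hJFeller : ∀ f : Y → ℝ, Continuous f → (∃ M, ∀ y, |f y| ≤ M) →
      Continuous (fun y => ∫ u, f u ∂(J y)) ∧ ∃ M, ∀ y, |∫ u, f u ∂(J y)| ≤ M) :
    ∀ f : Y × I → ℝ, Continuous f → (∃ M, ∀ x, |f x| ≤ M) →
      Continuous (fun x : Y × I =>
        ∫ t in Ioi (0:ℝ), lam (S x.2 t x.1) * exp (-(cumInt S lam x.1 x.2 t)) *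
          Wop pm J f (S x.2 t x.1, x.2)) ∧
      ∃ M, ∀ x : Y × I,
        |∫ t in Ioi (0:ℝ), lam (S x.2 t x.1) * exp (-(cumInt S lam x.1 x.2 t)) *
          Wop pm J f (S x.2 t x.1, x.2)| ≤ M := by
  rintro f hf ⟨Mf, hMf⟩
  choose hW_cont hW_bdd using continuous_and_bdd_Wop_slice hJFeller hpm_cont hpm_mem hf hMf
  obtain ⟨MW, hMW⟩ := exists_abs_le_of_finite hW_bdd
  have hint i := continuousOn_hazardIntegrand hlam_cont (hS_cont i) (hW_cont i)
  refine continuous_setIntegral_Ioi_and_bdd_of_le_exp hlmin (C := lmax * MW) ?_ ?_ ?_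
  · rintro ⟨y, i⟩
    exact (hint i).comp (continuous_id.prodMk continuous_const).continuousOn
      fun t ht => ⟨mem_Ici.2 (le_of_lt ht), mem_univ _⟩
  · intro t ht
    exact continuous_prod_of_discrete_right.2 fun i => (hint i).comp_continuous
      (continuous_const.prodMk continuous_id) fun _ => ⟨mem_Ici.2 (le_of_lt ht), mem_univ _⟩
  · rintro ⟨y, i⟩ t ht
    exact abs_hazardIntegrand_le hlam_cont (hS_cont i) hlmin.le hlam_bd (hMW i) y (le_of_lt ht)

theorem Pker_feller
    {Y : Type*} [MetricSpace Y] [TopologicalSpace.SeparableSpace Y] [CompleteSpace Y]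
    [MeasurableSpace Y] [BorelSpace Y]
    {I : Type*} [Fintype I] [Nonempty I] [TopologicalSpace I] [DiscreteTopology I]
    [MeasurableSpace I] [MeasurableSingletonClass I]
    (S : I → ℝ → Y → Y)
    (hS_cont : ∀ i, ContinuousOn (fun p : ℝ × Y => S i p.1 p.2) (Ici (0:ℝ) ×ˢ (univ : Set Y)))
    (hS_zero : ∀ i y, S i 0 y = y)
    (hS_add : ∀ i, ∀ s ≥ (0:ℝ), ∀ t ≥ (0:ℝ), ∀ y, S i (s + t) y = S i s (S i t y))
    (lam : Y → ℝ) (hlam_cont : Continuous lam) (lmin lmax : ℝ) (hlmin : 0 < lmin)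
    (hlam_bd : ∀ y, lmin ≤ lam y ∧ lam y ≤ lmax)
    (pm : I → I → Y → ℝ) (hpm_cont : ∀ i j, Continuous (pm i j))
    (hpm_mem : ∀ i j y, pm i j y ∈ Icc (0:ℝ) 1) (hpm_sum : ∀ i y, ∑ j, pm i j y = 1)
    (J : Kernel Y Y) [IsMarkovKernel J]
    (hJFeller : ∀ f : Y → ℝ, Continuous f → (∃ M, ∀ y, |f y| ≤ M) →
      Continuous (fun y => ∫ u, f u ∂(J y)) ∧ ∃ M, ∀ y, |∫ u, f u ∂(J y)| ≤ M) :
    ∀ f : Y × I → ℝ, Continuous f → (∃ M, ∀ x, |f x| ≤ M) →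
      Continuous (fun x : Y × I =>
        ∫ t in Ioi (0:ℝ), lam (S x.2 t x.1) * exp (-(cumInt S lam x.1 x.2 t)) *
          Wop pm J f (S x.2 t x.1, x.2)) ∧
      ∃ M, ∀ x : Y × I,
        |∫ t in Ioi (0:ℝ), lam (S x.2 t x.1) * exp (-(cumInt S lam x.1 x.2 t)) *
          Wop pm J f (S x.2 t x.1, x.2)| ≤ M :=
  Pker_feller_general S hS_cont lam hlam_cont lmin lmax hlmin hlam_bd pm hpm_cont hpm_mem J hJFeller
end
end

section
/- The semigroup {P_T}_{T≥0} is stochastically continuous: for every bounded continuous f : X → ℝ and every x ∈ X, lim_{T→0+} P_T f(x) = f(x). -/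
/-!
Write `P_T f(x) = Σₙ P̄ⁿ G_T (x,0)` with `G_T = g_T · (P̄ h_T)`. Under `P̄` the clock coordinate
strictly increases, and from clock time `s ≤ T` a jump lands at clock time `≤ T` with probability
at most `λ̄ (T - s)`. As `G_T` is bounded by `sup |f|` and vanishes at clock times `> T`, the `n`-th
term is at most `sup |f| · (λ̄ T)ⁿ`, so the terms with `n ≥ 1` contribute `O(T)`. The `n = 0` term
is `f(S_i(T,y), i) · P̄((y,i,0), {s > T})`, which tends to `f(y,i)` by continuity of the semiflow at
time `0` and because `P̄((y,i,0), {s ≤ T}) ≤ λ̄ T`.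
-/

open MeasureTheory ProbabilityTheory Real Set Filter Topology

noncomputable section

/-- With `T = τ z` this forces the clock `τ` to increase strictly `κ`-almost surely. -/
def ClockRateBound {Z : Type*} [MeasurableSpace Z] (κ : Kernel Z Z) (τ : Z → ℝ) (c : ℝ) : Prop :=
  ∀ z, 0 ≤ τ z → ∀ T, τ z ≤ T → (κ z).real {w | τ w ≤ T} ≤ c * (T - τ z)

namespace ClockRateBound

variable {Z : Type*} [MeasurableSpace Z] {κ : Kernel Z Z} {τ : Z → ℝ} {c T M : ℝ} {g : Z → ℝ}

theorem ae_lt [IsFiniteKernel κ] (h : ClockRateBound κ τ c) {z : Z} (hz : 0 ≤ τ z) :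
    ∀ᵐ w ∂κ z, τ z < τ w := by
  have hle : (κ z).real {w | τ w ≤ τ z} ≤ 0 := by simpa using h z hz (τ z) le_rfl
  have hnull : κ z {w | τ w ≤ τ z} = 0 :=
    (measureReal_eq_zero_iff).1 (le_antisymm hle measureReal_nonneg)
  simpa [ae_iff, not_lt] using hnull

theorem kernelOpIter_eq_zero [IsFiniteKernel κ] (h : ClockRateBound κ τ c)
    (hg : ∀ z, T < τ z → g z = 0) :
    ∀ n z, 0 ≤ τ z → T < τ z → kernelOpIter κ n g z = 0
  | 0, z, _, hTz => hg z hTz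
  | n + 1, _, hz, hTz => integral_eq_zero_of_ae <| (h.ae_lt hz).mono fun w hw =>
      kernelOpIter_eq_zero h hg n w (hz.trans hw.le) (hTz.trans hw)

theorem abs_kernelOpIter_le [IsFiniteKernel κ] (h : ClockRateBound κ τ c) (hτ : Measurable τ)
    (hc : 0 ≤ c) (hT : 0 ≤ T) (hg_le : ∀ z, |g z| ≤ M) (hg : ∀ z, T < τ z → g z = 0) :
    ∀ n z, 0 ≤ τ z → |kernelOpIter κ n g z| ≤ M * (c * T) ^ n
  | 0, z, _ => by simpa [kernelOpIter] using hg_le z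
  | n + 1, z, hz => by
    have hM : 0 ≤ M := (abs_nonneg _).trans (hg_le z)
    have hcT : 0 ≤ c * T := mul_nonneg hc hT
    rcases lt_or_ge T (τ z) with hTz | hzT
    · rw [h.kernelOpIter_eq_zero hg (n + 1) z hz hTz, abs_zero]
      positivity
    have hbound : ∀ᵐ w ∂κ z, ‖kernelOpIter κ n g w‖ ≤
        {w | τ w ≤ T}.indicator (fun _ => M * (c * T) ^ n) w := by
      filter_upwards [h.ae_lt hz] with w hw
      rcases le_or_gt (τ w) T with hwT | hTw
      · simpa [Set.indicator_of_mem (show w ∈ {w | τ w ≤ T} from hwT)] using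
          abs_kernelOpIter_le h hτ hc hT hg_le hg n w (hz.trans hw.le)
      · rw [h.kernelOpIter_eq_zero hg n w (hz.trans hw.le) hTw, norm_zero]
        exact Set.indicator_nonneg (fun _ _ => by positivity) w
    calc |kernelOpIter κ (n + 1) g z|
        ≤ ∫ w, {w | τ w ≤ T}.indicator (fun _ => M * (c * T) ^ n) w ∂κ z :=
          norm_integral_le_of_norm_le
            ((integrable_const _).indicator (measurableSet_le hτ measurable_const)) hbound
      _ = (κ z).real {w | τ w ≤ T} * (M * (c * T) ^ n) := by
          rw [integral_indicator_const _ (measurableSet_le hτ measurable_const), smul_eq_mul]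
      _ ≤ c * T * (M * (c * T) ^ n) := by
          gcongr
          calc (κ z).real {w | τ w ≤ T} ≤ c * (T - τ z) := h z hz T hzT
            _ ≤ c * T := by gcongr; linarith
      _ = M * (c * T) ^ (n + 1) := by ring

theorem abs_tsum_kernelOpIter_sub_le [IsFiniteKernel κ] (h : ClockRateBound κ τ c)
    (hτ : Measurable τ) (hc : 0 ≤ c) (hT : 0 ≤ T) (hcT : c * T ≤ 1 / 2)
    (hg_le : ∀ z, |g z| ≤ M) (hg : ∀ z, T < τ z → g z = 0) {z : Z} (hz : 0 ≤ τ z) :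
    |∑' n, kernelOpIter κ n g z - g z| ≤ 2 * M * (c * T) := by
  have hM : 0 ≤ M := (abs_nonneg _).trans (hg_le z)
  have hcT0 : 0 ≤ c * T := mul_nonneg hc hT
  have hterm (n : ℕ) : ‖kernelOpIter κ n g z‖ ≤ M * (c * T) ^ n :=
    h.abs_kernelOpIter_le hτ hc hT hg_le hg n z hz
  have hgeom : HasSum (fun n : ℕ => M * (c * T) * (c * T) ^ n) (M * (c * T) * (1 - c * T)⁻¹) :=
    (hasSum_geometric_of_lt_one hcT0 (by linarith)).mul_left _
  have hsummable : Summable fun n => kernelOpIter κ n g z :=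
    .of_norm_bounded ((summable_geometric_of_lt_one hcT0 (by linarith)).mul_left M) hterm
  rw [hsummable.tsum_eq_zero_add, kernelOpIter, add_sub_cancel_left, ← Real.norm_eq_abs]
  calc ‖∑' n, kernelOpIter κ (n + 1) g z‖ ≤ M * (c * T) * (1 - c * T)⁻¹ :=
        tsum_of_norm_bounded hgeom fun n => (hterm (n + 1)).trans_eq (by ring)
    _ ≤ M * (c * T) * 2 := by
        gcongr
        rw [inv_le_comm₀ (by linarith) two_pos]
        linarith
    _ = 2 * M * (c * T) := by ring

theorem tendsto_tsum_kernelOpIter_sub [IsFiniteKernel κ] (h : ClockRateBound κ τ c)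
    (hτ : Measurable τ) (hc : 0 ≤ c) {g : ℝ → Z → ℝ} (hg_le : ∀ T z, |g T z| ≤ M)
    (hg : ∀ T z, T < τ z → g T z = 0) {z : Z} (hz : 0 ≤ τ z) :
    Tendsto (fun T => ∑' n, kernelOpIter κ n (g T) z - g T z) (𝓝[>] 0) (𝓝 0) := by
  have hcT : Tendsto (fun T : ℝ => c * T) (𝓝[>] 0) (𝓝 0) :=
    tendsto_nhdsWithin_of_tendsto_nhds (by simpa using (continuous_const_mul c).tendsto 0)
  refine squeeze_zero_norm' ?_ (by simpa using hcT.const_mul (2 * M))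
  filter_upwards [self_mem_nhdsWithin, hcT.eventually_le_const (by norm_num : (0 : ℝ) < 1 / 2)]
    with T hT hcT_le
  exact h.abs_tsum_kernelOpIter_sub_le hτ hc (le_of_lt hT) hcT_le (hg_le T) (hg T) hz

theorem tendsto_measureReal_lt [IsMarkovKernel κ] (h : ClockRateBound κ τ c)
    (hτ : Measurable τ) {z : Z} (hz : 0 ≤ τ z) :
    Tendsto (fun T => (κ z).real {w | T < τ w}) (𝓝[>] (τ z)) (𝓝 1) := by
  have hcompl (T : ℝ) : (κ z).real {w | T < τ w} = 1 - (κ z).real {w | τ w ≤ T} := by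
    rw [← probReal_compl_eq_one_sub (measurableSet_le hτ measurable_const)]
    simp only [compl_ofPred, not_le]
  have hearly : Tendsto (fun T => (κ z).real {w | τ w ≤ T}) (𝓝[>] (τ z)) (𝓝 0) := by
    refine squeeze_zero' (g := fun T => c * (T - τ z))
      (.of_forall fun _ => measureReal_nonneg) ?_ ?_
    · filter_upwards [self_mem_nhdsWithin] with T hT using h z hz T (le_of_lt hT)
    · exact tendsto_nhdsWithin_of_tendsto_nhds (by
        simpa using ((continuous_id.sub (continuous_const (y := τ z))).const_mul c).tendsto (τ z))
  simpa [hcompl] using hearly.const_sub 1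

end ClockRateBound

theorem integral_indicator_one_comp {Z : Type*} [MeasurableSpace Z] {μ : Measure Z} {τ : Z → ℝ}
    (hτ : Measurable τ) {s : Set ℝ} (hs : MeasurableSet s) :
    ∫ w, s.indicator (fun _ => (1 : ℝ)) (τ w) ∂μ = μ.real (τ ⁻¹' s) := by
  simp_rw [← Set.indicator_comp_right τ]
  exact integral_indicator_one (hτ hs)

theorem setIntegral_Ioi_le_mul {F : ℝ → ℝ} {C r : ℝ} (hr : 0 ≤ r)
    (hF_le : ∀ t ∈ Ioc 0 r, |F t| ≤ C) (hF : ∀ t, r < t → F t = 0) :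
    ∫ t in Ioi 0, F t ≤ C * r := by
  rw [setIntegral_eq_of_subset_of_forall_sdiff_eq_zero measurableSet_Ioi Ioc_subset_Ioi_self
    fun t ⟨ht0, htr⟩ => hF t (lt_of_not_ge fun h => htr ⟨ht0, h⟩)]
  calc ∫ t in Ioc 0 r, F t ≤ ‖∫ t in Ioc 0 r, F t‖ := le_abs_self _
    _ ≤ C * volume.real (Ioc 0 r) := norm_setIntegral_le_of_norm_le_const measure_Ioc_lt_top hF_le
    _ = C * r := by simp [hr]

section Flow

variable {Y I : Type*} {S : I → ℝ → Y → Y} {lam : Y → ℝ} {lmax : ℝ} {pm : I → I → Y → ℝ}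

theorem tendsto_apply_nhdsGT_zero_of_continuousOn {φ : ℝ → Y → Y} [TopologicalSpace Y]
    (hφ : ContinuousOn (fun p : ℝ × Y => φ p.1 p.2) (Ici 0 ×ˢ univ)) (hφ0 : ∀ y, φ 0 y = y)
    (y : Y) : Tendsto (fun t => φ t y) (𝓝[>] 0) (𝓝 y) := by
  have hslice : ContinuousOn (fun t => φ t y) (Ici 0) :=
    hφ.comp (continuous_id.prodMk continuous_const).continuousOn fun t ht => ⟨ht, mem_univ y⟩
  simpa [hφ0] using
    (hslice 0 self_mem_Ici).tendsto.mono_left (nhdsWithin_mono 0 Ioi_subset_Ici_self)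

theorem abs_rate_mul_exp_neg_cumInt_le (hlam_nonneg : ∀ y, 0 ≤ lam y)
    (hlam_le : ∀ y, lam y ≤ lmax) (y : Y) (i : I) {t : ℝ} (ht : 0 ≤ t) :
    |lam (S i t y) * exp (-cumInt S lam y i t)| ≤ lmax := by
  have hcum : 0 ≤ cumInt S lam y i t :=
    intervalIntegral.integral_nonneg ht fun _ _ => hlam_nonneg _
  rw [abs_of_nonneg (mul_nonneg (hlam_nonneg _) (exp_pos _).le)]
  calc lam (S i t y) * exp (-cumInt S lam y i t) ≤ lmax * 1 :=
        mul_le_mul (hlam_le _) (exp_le_one_iff.2 (neg_nonpos.2 hcum)) (exp_pos _).le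
          ((hlam_nonneg (S i t y)).trans (hlam_le _))
    _ = lmax := mul_one _

theorem integral_sum_pm_mul_const [MeasurableSpace Y] [Fintype I]
    (hpm_sum : ∀ i y, ∑ j, pm i j y = 1) (ν : Measure Y) [IsProbabilityMeasure ν] (i : I) (a : ℝ) :
    ∫ u, ∑ j, pm i j u * a ∂ν = a := by
  simp [← Finset.sum_mul, hpm_sum]

theorem clockRateBound_of_measure_eq [MeasurableSpace Y] [Fintype I] [MeasurableSpace I]
    {J : Kernel Y Y} [IsMarkovKernel J] {Pbar : Kernel (Y × I × ℝ) (Y × I × ℝ)}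
    (hlam_nonneg : ∀ y, 0 ≤ lam y) (hlam_le : ∀ y, lam y ≤ lmax) (hpm_sum : ∀ i y, ∑ j, pm i j y = 1)
    (hPbar : ∀ y i, ∀ s ≥ (0:ℝ), ∀ A : Set (Y × I × ℝ), MeasurableSet A →
      ((Pbar (y, i, s)) A).toReal =
        ∫ t in Ioi (0:ℝ), lam (S i t y) * exp (-(cumInt S lam y i t)) *
          ∫ u, ∑ j, pm i j u * A.indicator (fun _ => (1:ℝ)) (u, j, s + t) ∂(J (S i t y))) :
    ClockRateBound Pbar (fun z => z.2.2) lmax := by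
  rintro ⟨y, i, s⟩ (hs : 0 ≤ s) T (hsT : s ≤ T)
  -- At `(u, j, s + t)` the indicator of `{w | w.2.2 ≤ T}` is independent of `u, j` by `rfl`.
  have hinner (t : ℝ) :
      ∫ u, ∑ j, pm i j u * {w : Y × I × ℝ | w.2.2 ≤ T}.indicator (fun _ => (1:ℝ)) (u, j, s + t)
        ∂(J (S i t y)) = (Iic T).indicator (fun _ => 1) (s + t) :=
    integral_sum_pm_mul_const hpm_sum (J (S i t y)) i ((Iic T).indicator (fun _ => 1) (s + t))
  dsimp only
  rw [Measure.real, hPbar y i s hs {w | w.2.2 ≤ T} (measurable_snd.snd measurableSet_Iic)]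
  simp_rw [hinner]
  refine setIntegral_Ioi_le_mul (by linarith) (fun t ht => ?_) (fun t ht => ?_)
  · rw [Set.indicator_of_mem (mem_Iic.2 (by linarith [ht.2])), mul_one]
    exact abs_rate_mul_exp_neg_cumInt_le hlam_nonneg hlam_le y i ht.1.le
  · rw [Set.indicator_of_notMem fun h => by linarith [mem_Iic.1 h], mul_zero]


/-- The function `g_T · (P̄ h_T)` whose `P̄`-iterates are summed in `PTf`. -/
def ptIntegrand [MeasurableSpace Y] [MeasurableSpace I] (S : I → ℝ → Y → Y)
    (Pbar : Kernel (Y × I × ℝ) (Y × I × ℝ)) (f : Y × I → ℝ) (T : ℝ) (z : Y × I × ℝ) : ℝ :=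
  (Icc (0:ℝ) T).indicator (fun _ => (1:ℝ)) z.2.2 * f (S z.2.1 (T - z.2.2) z.1, z.2.1) *
    ∫ w, (Ioi T).indicator (fun _ => (1:ℝ)) w.2.2 ∂(Pbar z)

variable [MeasurableSpace Y] [MeasurableSpace I] {Pbar : Kernel (Y × I × ℝ) (Y × I × ℝ)}
  {f : Y × I → ℝ}

theorem PTf_eq_tsum (T : ℝ) (x : Y × I) :
    PTf S Pbar f T x = ∑' n, kernelOpIter Pbar n (ptIntegrand S Pbar f T) (x.1, x.2, 0) := rfl

theorem ptIntegrand_eq (T : ℝ) (z : Y × I × ℝ) :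
    ptIntegrand S Pbar f T z = (Icc (0:ℝ) T).indicator (fun _ => (1:ℝ)) z.2.2 *
      f (S z.2.1 (T - z.2.2) z.1, z.2.1) * (Pbar z).real {w | T < w.2.2} := by
  rw [ptIntegrand, integral_indicator_one_comp measurable_snd.snd measurableSet_Ioi]
  rfl

theorem ptIntegrand_of_lt {T : ℝ} {z : Y × I × ℝ} (hT : T < z.2.2) :
    ptIntegrand S Pbar f T z = 0 := by
  simp [ptIntegrand, hT.not_ge]

theorem abs_ptIntegrand_le [IsMarkovKernel Pbar] {M : ℝ} (hf : ∀ x, |f x| ≤ M) (T : ℝ)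
    (z : Y × I × ℝ) : |ptIntegrand S Pbar f T z| ≤ M := by
  have hind : |(Icc (0:ℝ) T).indicator (fun _ => (1:ℝ)) z.2.2| ≤ 1 := by
    unfold Set.indicator; split_ifs <;> simp
  rw [ptIntegrand_eq, abs_mul, abs_mul, abs_of_nonneg measureReal_nonneg]
  calc _ ≤ 1 * M * 1 :=
        mul_le_mul (mul_le_mul hind (hf _) (abs_nonneg _) zero_le_one) measureReal_le_one
          measureReal_nonneg (by simpa using (abs_nonneg _).trans (hf (z.1, z.2.1)))
    _ = M := by ring

theorem ptIntegrand_apply_zero {T : ℝ} (hT : 0 ≤ T) (y : Y) (i : I) :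
    ptIntegrand S Pbar f T (y, i, 0) =
      f (S i T y, i) * (Pbar (y, i, 0)).real {w | T < w.2.2} := by
  rw [ptIntegrand_eq, Set.indicator_of_mem (show (0:ℝ) ∈ Icc 0 T from ⟨le_rfl, hT⟩), one_mul,
    sub_zero]

end Flow

theorem PT_stochastically_continuous_general
    {Y : Type*} [MetricSpace Y]
    [MeasurableSpace Y]
    {I : Type*} [Fintype I] [TopologicalSpace I]
    [MeasurableSpace I]
    (S : I → ℝ → Y → Y)
    (hS_cont : ∀ i, ContinuousOn (fun p : ℝ × Y => S i p.1 p.2) (Ici (0:ℝ) ×ˢ (univ : Set Y)))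
    (hS_zero : ∀ i y, S i 0 y = y)
    (lam : Y → ℝ) (lmin lmax : ℝ) (hlmin : 0 < lmin)
    (hlam_bd : ∀ y, lmin ≤ lam y ∧ lam y ≤ lmax)
    (pm : I → I → Y → ℝ)
    (hpm_sum : ∀ i y, ∑ j, pm i j y = 1)
    (J : Kernel Y Y) [IsMarkovKernel J]
    (Pbar : Kernel (Y × I × ℝ) (Y × I × ℝ)) [IsMarkovKernel Pbar]
    (hPbar : ∀ y i, ∀ s ≥ (0:ℝ), ∀ A : Set (Y × I × ℝ), MeasurableSet A →
      ((Pbar (y, i, s)) A).toReal =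
        ∫ t in Ioi (0:ℝ), lam (S i t y) * exp (-(cumInt S lam y i t)) *
          ∫ u, ∑ j, pm i j u * A.indicator (fun _ => (1:ℝ)) (u, j, s + t) ∂(J (S i t y))) :
    ∀ f : Y × I → ℝ, Continuous f → (∃ M, ∀ x, |f x| ≤ M) →
      ∀ x : Y × I, Tendsto (fun T => PTf S Pbar f T x) (𝓝[>] (0:ℝ)) (𝓝 (f x)) := by
  intro f hf ⟨M, hM⟩ x
  have hlam_nonneg (y : Y) : 0 ≤ lam y := hlmin.le.trans (hlam_bd y).1
  have hclock : ClockRateBound Pbar (fun z => z.2.2) lmax :=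
    clockRateBound_of_measure_eq (J := J) hlam_nonneg (fun y => (hlam_bd y).2) hpm_sum hPbar
  have hτ : Measurable fun z : Y × I × ℝ => z.2.2 := measurable_snd.snd
  have hflow : Tendsto (fun T => f (S x.2 T x.1, x.2)) (𝓝[>] 0) (𝓝 (f x)) :=
    (hf.tendsto x).comp
      ((tendsto_apply_nhdsGT_zero_of_continuousOn (hS_cont x.2) (hS_zero x.2) x.1).prodMk_nhds
        tendsto_const_nhds)
  have hsurvive : Tendsto (fun T => (Pbar (x.1, x.2, 0)).real {w | T < w.2.2}) (𝓝[>] 0) (𝓝 1) :=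
    hclock.tendsto_measureReal_lt hτ (z := (x.1, x.2, 0)) le_rfl
  have hhead : Tendsto (fun T => ptIntegrand S Pbar f T (x.1, x.2, 0)) (𝓝[>] 0) (𝓝 (f x)) := by
    rw [← mul_one (f x)]
    refine (hflow.mul hsurvive).congr' ?_
    filter_upwards [self_mem_nhdsWithin] with T hT
    exact (ptIntegrand_apply_zero (le_of_lt hT) x.1 x.2).symm
  have htail := hclock.tendsto_tsum_kernelOpIter_sub (g := ptIntegrand S Pbar f) hτ
    ((hlam_nonneg x.1).trans (hlam_bd x.1).2) (abs_ptIntegrand_le hM)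
    (fun _ _ => ptIntegrand_of_lt) (z := (x.1, x.2, 0)) le_rfl
  simpa [PTf_eq_tsum] using hhead.add htail

theorem PT_stochastically_continuous
    {Y : Type*} [MetricSpace Y] [TopologicalSpace.SeparableSpace Y] [CompleteSpace Y]
    [MeasurableSpace Y] [BorelSpace Y]
    {I : Type*} [Fintype I] [Nonempty I] [TopologicalSpace I] [DiscreteTopology I]
    [MeasurableSpace I] [MeasurableSingletonClass I]
    (S : I → ℝ → Y → Y)
    (hS_cont : ∀ i, ContinuousOn (fun p : ℝ × Y => S i p.1 p.2) (Ici (0:ℝ) ×ˢ (univ : Set Y)))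
    (hS_zero : ∀ i y, S i 0 y = y)
    (hS_add : ∀ i, ∀ s ≥ (0:ℝ), ∀ t ≥ (0:ℝ), ∀ y, S i (s + t) y = S i s (S i t y))
    (lam : Y → ℝ) (hlam_cont : Continuous lam) (lmin lmax : ℝ) (hlmin : 0 < lmin)
    (hlam_bd : ∀ y, lmin ≤ lam y ∧ lam y ≤ lmax)
    (pm : I → I → Y → ℝ) (hpm_cont : ∀ i j, Continuous (pm i j))
    (hpm_mem : ∀ i j y, pm i j y ∈ Icc (0:ℝ) 1) (hpm_sum : ∀ i y, ∑ j, pm i j y = 1)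
    (J : Kernel Y Y) [IsMarkovKernel J]
    (Pbar : Kernel (Y × I × ℝ) (Y × I × ℝ)) [IsMarkovKernel Pbar]
    (hPbar : ∀ y i, ∀ s ≥ (0:ℝ), ∀ A : Set (Y × I × ℝ), MeasurableSet A →
      ((Pbar (y, i, s)) A).toReal =
        ∫ t in Ioi (0:ℝ), lam (S i t y) * exp (-(cumInt S lam y i t)) *
          ∫ u, ∑ j, pm i j u * A.indicator (fun _ => (1:ℝ)) (u, j, s + t) ∂(J (S i t y))) :
    ∀ f : Y × I → ℝ, Continuous f → (∃ M, ∀ x, |f x| ≤ M) →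
      ∀ x : Y × I, Tendsto (fun T => PTf S Pbar f T x) (𝓝[>] (0:ℝ)) (𝓝 (f x)) :=
  PT_stochastically_continuous_general S hS_cont hS_zero lam lmin lmax hlmin hlam_bd pm hpm_sum J
    Pbar hPbar
end
end

section
/- Let f : X → ℝ and g : X → ℝ be bounded continuous functions such that (Q_t f − f)/t converges pointwise to g as t → 0+ and sup_{0<t≤δ} ‖(Q_t f − f)/t‖_∞ < ∞ for some δ > 0 (i.e. f ∈ D(A_Q) with A_Q f = g). Then for every x ∈ X, Gf(x) − G(g/λ̂)(x) = f(x). -/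
open MeasureTheory ProbabilityTheory Real Set Filter Topology

noncomputable section

/-! Along the orbit `φ t = S_i(t, y)` put `Λ t = ∫₀ᵗ λ(φ)` and `u t = f(φ t, i)`. The generator
hypothesis together with the semigroup law says that `u` has right derivative `g(φ t, i)`, so
`t ↦ e^{-Λ t} u t` has right derivative `e^{-Λ}(g - λ u)`. Integrating over `(0, ∞)` gives
`G(g/λ̂) - Gf = 0 - f(y, i)`: the boundary term at infinity vanishes because `Λ t ≥ λ̲ t`, and the
fundamental theorem of calculus on `(0, ∞)` needs only right derivatives of a continuous function. -/

section ImproperFTC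

variable {E : Type*} [NormedAddCommGroup E] [NormedSpace ℝ E] [CompleteSpace E]

theorem integral_Ioi_of_hasDerivWithinAt_Ioi_of_tendsto {f f' : ℝ → E} {a : ℝ} {m : E}
    (hcont : ContinuousOn f (Ici a)) (hderiv : ∀ x ∈ Ioi a, HasDerivWithinAt f (f' x) (Ioi x) x)
    (f'int : IntegrableOn f' (Ioi a)) (hf : Tendsto f atTop (𝓝 m)) :
    ∫ x in Ioi a, f' x = m - f a := by
  refine tendsto_nhds_unique (intervalIntegral_tendsto_integral_Ioi a f'int tendsto_id) ?_
  refine (hf.sub_const _).congr' ?_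
  filter_upwards [Ioi_mem_atTop a] with b hb
  have hab : a ≤ b := le_of_lt hb
  refine (intervalIntegral.integral_eq_sub_of_hasDeriv_right_of_le hab
    (hcont.mono Icc_subset_Ici_self) (fun x hx => hderiv x hx.1) ?_).symm
  rw [intervalIntegrable_iff_integrableOn_Ioc_of_le hab]
  exact f'int.mono_set fun x hx => hx.1

end ImproperFTC

section Survival

variable {r : ℝ → ℝ} {c : ℝ}

theorem hasDerivAt_exp_neg_integral (hr : Continuous r) (t : ℝ) :
    HasDerivAt (fun t => exp (-∫ s in (0:ℝ)..t, r s))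
      (-(r t * exp (-∫ s in (0:ℝ)..t, r s))) t := by
  have hR : HasDerivAt (fun t => ∫ s in (0:ℝ)..t, r s) (r t) t :=
    intervalIntegral.integral_hasDerivAt_right (hr.intervalIntegrable _ _)
      (hr.stronglyMeasurableAtFilter _ _) hr.continuousAt
  simpa [mul_comm] using hR.neg.exp

theorem continuous_exp_neg_integral (hr : Continuous r) :
    Continuous fun t => exp (-∫ s in (0:ℝ)..t, r s) :=
  continuous_iff_continuousAt.2 fun t => (hasDerivAt_exp_neg_integral hr t).continuousAt

theorem exp_neg_integral_le (hr : Continuous r) (hr_ge : ∀ t ≥ 0, c ≤ r t) {t : ℝ}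
    (ht : 0 ≤ t) : exp (-∫ s in (0:ℝ)..t, r s) ≤ exp (-c * t) := by
  have hR : c * t ≤ ∫ s in (0:ℝ)..t, r s := by
    simpa [mul_comm] using intervalIntegral.integral_mono_on ht
      (intervalIntegrable_const (μ := volume)) (hr.intervalIntegrable 0 t) fun s hs => hr_ge s hs.1
  exact exp_le_exp.2 (by linarith)

theorem tendsto_exp_neg_integral_atTop (hr : Continuous r) (hc : 0 < c)
    (hr_ge : ∀ t ≥ 0, c ≤ r t) :
    Tendsto (fun t => exp (-∫ s in (0:ℝ)..t, r s)) atTop (𝓝 0) := by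
  have hdecay : Tendsto (fun t => exp (-c * t)) atTop (𝓝 0) :=
    tendsto_exp_atBot.comp (tendsto_id.const_mul_atTop_of_neg (neg_lt_zero.2 hc))
  refine squeeze_zero' (Eventually.of_forall fun t => (exp_pos _).le) ?_ hdecay
  filter_upwards [eventually_ge_atTop 0] with t ht using exp_neg_integral_le hr hr_ge ht

theorem integrableOn_exp_neg_integral (hr : Continuous r) (hc : 0 < c)
    (hr_ge : ∀ t ≥ 0, c ≤ r t) :
    IntegrableOn (fun t => exp (-∫ s in (0:ℝ)..t, r s)) (Ioi 0) := by
  refine (exp_neg_integrableOn_Ioi 0 hc).mono'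
    (continuous_exp_neg_integral hr).aestronglyMeasurable ?_
  filter_upwards [ae_restrict_mem measurableSet_Ioi] with t ht
  rw [norm_of_nonneg (exp_pos _).le]
  exact exp_neg_integral_le hr hr_ge (le_of_lt ht)

theorem integrableOn_mul_exp_neg_integral (hr : Continuous r) (hc : 0 < c)
    (hr_ge : ∀ t ≥ 0, c ≤ r t) :
    IntegrableOn (fun t => r t * exp (-∫ s in (0:ℝ)..t, r s)) (Ioi 0) := by
  -- `r e^{-R}` is the nonnegative derivative of `-e^{-R}`, which tends to `0` at infinity
  refine integrableOn_Ioi_deriv_of_nonneg' (g := fun t => -exp (-∫ s in (0:ℝ)..t, r s))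
    (fun t _ => by simpa using (hasDerivAt_exp_neg_integral hr t).fun_neg) (fun t ht => ?_)
    (tendsto_exp_neg_integral_atTop hr hc hr_ge).neg
  exact mul_nonneg (hc.le.trans (hr_ge t (le_of_lt ht))) (exp_pos _).le

theorem integral_mul_exp_neg_integral_sub_of_hasDerivWithinAt (hr : Continuous r)
    (hc : 0 < c) (hr_ge : ∀ t ≥ 0, c ≤ r t) {u v : ℝ → ℝ} {Mu Mv : ℝ}
    (hu : Continuous u) (hu_bdd : ∀ t, |u t| ≤ Mu) (hv : Continuous v) (hv_bdd : ∀ t, |v t| ≤ Mv)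
    (hderiv : ∀ t > 0, HasDerivWithinAt u (v t) (Ioi t) t) :
    (∫ t in Ioi 0, r t * exp (-∫ s in (0:ℝ)..t, r s) * u t)
      - ∫ t in Ioi 0, exp (-∫ s in (0:ℝ)..t, r s) * v t = u 0 := by
  set R : ℝ → ℝ := fun t => exp (-∫ s in (0:ℝ)..t, r s) with hR
  have hjump_int : IntegrableOn (fun t => r t * R t * u t) (Ioi 0) :=
    (integrableOn_mul_exp_neg_integral hr hc hr_ge).mul_bdd hu.aestronglyMeasurable
      (Eventually.of_forall hu_bdd)
  have hflow_int : IntegrableOn (fun t => R t * v t) (Ioi 0) :=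
    (integrableOn_exp_neg_integral hr hc hr_ge).mul_bdd hv.aestronglyMeasurable
      (Eventually.of_forall hv_bdd)
  have hRu_deriv : ∀ t ∈ Ioi (0:ℝ),
      HasDerivWithinAt (fun t => R t * u t) (R t * v t - r t * R t * u t) (Ioi t) t := by
    intro t ht
    refine ((hasDerivAt_exp_neg_integral hr t).hasDerivWithinAt.mul (hderiv t ht)).congr_deriv ?_
    ring
  have hRu_lim : Tendsto (fun t => R t * u t) atTop (𝓝 0) :=
    (tendsto_exp_neg_integral_atTop hr hc hr_ge).zero_mul_isBoundedUnder_le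
      (isBoundedUnder_of ⟨Mu, fun t => hu_bdd t⟩)
  have hFTC := integral_Ioi_of_hasDerivWithinAt_Ioi_of_tendsto
    ((continuous_exp_neg_integral hr).mul hu).continuousOn hRu_deriv
    (hflow_int.sub hjump_int) hRu_lim
  rw [integral_sub hflow_int hjump_int] at hFTC
  simp only [hR, Pi.mul_apply, intervalIntegral.integral_same, neg_zero, exp_zero, one_mul,
    zero_sub] at hFTC
  linarith

end Survival

theorem hasDerivWithinAt_Ioi_comp_semiflow {Y : Type*} {S : ℝ → Y → Y}
    (hS_add : ∀ s ≥ (0:ℝ), ∀ t ≥ (0:ℝ), ∀ y, S (s + t) y = S s (S t y))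
    {F G : Y → ℝ} (hFG : ∀ y, Tendsto (fun t => (F (S t y) - F y) / t) (𝓝[>] 0) (𝓝 (G y)))
    (y : Y) {t : ℝ} (ht : 0 ≤ t) :
    HasDerivWithinAt (fun s => F (S s y)) (G (S t y)) (Ioi t) t := by
  rw [hasDerivWithinAt_iff_tendsto_slope, sdiff_singleton_eq_self self_notMem_Ioi]
  have hshift : Tendsto (fun s => s - t) (𝓝[>] t) (𝓝[>] 0) :=
    tendsto_nhdsWithin_of_tendsto_nhds_of_eventually_within _
      (by simpa using ((continuous_sub_right t).tendsto t).mono_left nhdsWithin_le_nhds)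
      (by filter_upwards [self_mem_nhdsWithin] with s (hs : t < s) using sub_pos.2 hs)
  refine ((hFG (S t y)).comp hshift).congr' ?_
  filter_upwards [self_mem_nhdsWithin] with s (hs : t < s)
  rw [Function.comp_apply, slope_def_field, ← hS_add _ (sub_nonneg.2 hs.le) t ht, sub_add_cancel]

theorem Gop_apply_eq_integral_of_orbit_eq {Y I : Type*} (S : I → ℝ → Y → Y) (lam : Y → ℝ)
    (h : Y × I → ℝ) {y : Y} {i : I} {φ : ℝ → Y} (hφ : ∀ t ≥ 0, φ t = S i t y) :
    Gop S lam h (y, i) =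
      ∫ t in Ioi 0, lam (φ t) * exp (-∫ s in (0:ℝ)..t, lam (φ s)) * h (φ t, i) := by
  refine setIntegral_congr_fun measurableSet_Ioi fun t (ht : 0 < t) => ?_
  have hcum : cumInt S lam y i t = ∫ s in (0:ℝ)..t, lam (φ s) :=
    intervalIntegral.integral_congr fun s hs => by
      rw [uIcc_of_le ht.le] at hs
      simp only [hφ s hs.1]
  simp only [hφ t ht.le, hcum]

theorem G_resolvent_identity_general
    {Y : Type*} [MetricSpace Y]
    {I : Type*} [TopologicalSpace I]
    (S : I → ℝ → Y → Y)
    (hS_cont : ∀ i, ContinuousOn (fun p : ℝ × Y => S i p.1 p.2) (Ici (0:ℝ) ×ˢ (univ : Set Y)))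
    (hS_zero : ∀ i y, S i 0 y = y)
    (hS_add : ∀ i, ∀ s ≥ (0:ℝ), ∀ t ≥ (0:ℝ), ∀ y, S i (s + t) y = S i s (S i t y))
    (lam : Y → ℝ) (hlam_cont : Continuous lam) (lmin lmax : ℝ) (hlmin : 0 < lmin)
    (hlam_bd : ∀ y, lmin ≤ lam y ∧ lam y ≤ lmax)
    (f g : Y × I → ℝ) (hf_cont : Continuous f) (hf_bdd : ∃ M, ∀ x, |f x| ≤ M)
    (hg_cont : Continuous g) (hg_bdd : ∃ M, ∀ x, |g x| ≤ M)
    (hlim : ∀ x : Y × I,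
      Tendsto (fun t => (f (S x.2 t x.1, x.2) - f x) / t) (𝓝[>] (0:ℝ)) (𝓝 (g x))) :
    ∀ x : Y × I, Gop S lam f x - Gop S lam (fun z => g z / lam z.1) x = f x := by
  rintro ⟨y, i⟩
  obtain ⟨Mf, hMf⟩ := hf_bdd
  obtain ⟨Mg, hMg⟩ := hg_bdd
  -- the orbit of `y`, extended continuously to negative times
  set φ : ℝ → Y := fun t => S i (max t 0) y
  have hφ : ∀ t ≥ 0, φ t = S i t y := fun t ht => by simp only [φ, max_eq_left ht]
  have hφ_cont : Continuous φ :=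
    (hS_cont i).comp_continuous ((continuous_id.max continuous_const).prodMk continuous_const)
      fun t => ⟨le_max_right t 0, mem_univ y⟩
  have hderiv : ∀ t > 0, HasDerivWithinAt (fun t => f (φ t, i)) (g (φ t, i)) (Ioi t) t := by
    intro t ht
    have hflow := hasDerivWithinAt_Ioi_comp_semiflow (hS_add i) (F := fun z => f (z, i))
      (G := fun z => g (z, i)) (fun z => hlim (z, i)) y ht.le
    rw [hφ t ht.le]
    exact hflow.congr (fun s (hs : t < s) => congrArg (fun z => f (z, i)) (hφ s (ht.trans hs).le))
      (congrArg (fun z => f (z, i)) (hφ t ht.le))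
  have hGg : Gop S lam (fun z => g z / lam z.1) (y, i) =
      ∫ t in Ioi 0, exp (-∫ s in (0:ℝ)..t, lam (φ s)) * g (φ t, i) := by
    rw [Gop_apply_eq_integral_of_orbit_eq S lam _ hφ]
    refine integral_congr_ae (Eventually.of_forall fun t => ?_)
    have hlam_ne : lam (φ t) ≠ 0 := (hlmin.trans_le (hlam_bd (φ t)).1).ne'
    field_simp
  rw [Gop_apply_eq_integral_of_orbit_eq S lam f hφ, hGg,
    integral_mul_exp_neg_integral_sub_of_hasDerivWithinAt (r := fun t => lam (φ t))
      (u := fun t => f (φ t, i)) (v := fun t => g (φ t, i)) (hlam_cont.comp hφ_cont) hlmin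
      (fun t _ => (hlam_bd (φ t)).1) (hf_cont.comp (by fun_prop)) (fun t => hMf (φ t, i))
      (hg_cont.comp (by fun_prop)) (fun t => hMg (φ t, i)) hderiv,
    hφ 0 le_rfl, hS_zero]

theorem G_resolvent_identity
    {Y : Type*} [MetricSpace Y] [TopologicalSpace.SeparableSpace Y] [CompleteSpace Y]
    [MeasurableSpace Y] [BorelSpace Y]
    {I : Type*} [Fintype I] [Nonempty I] [TopologicalSpace I] [DiscreteTopology I]
    [MeasurableSpace I] [MeasurableSingletonClass I]
    (S : I → ℝ → Y → Y)
    (hS_cont : ∀ i, ContinuousOn (fun p : ℝ × Y => S i p.1 p.2) (Ici (0:ℝ) ×ˢ (univ : Set Y)))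
    (hS_zero : ∀ i y, S i 0 y = y)
    (hS_add : ∀ i, ∀ s ≥ (0:ℝ), ∀ t ≥ (0:ℝ), ∀ y, S i (s + t) y = S i s (S i t y))
    (lam : Y → ℝ) (hlam_cont : Continuous lam) (lmin lmax : ℝ) (hlmin : 0 < lmin)
    (hlam_bd : ∀ y, lmin ≤ lam y ∧ lam y ≤ lmax)
    (f g : Y × I → ℝ) (hf_cont : Continuous f) (hf_bdd : ∃ M, ∀ x, |f x| ≤ M)
    (hg_cont : Continuous g) (hg_bdd : ∃ M, ∀ x, |g x| ≤ M)
    (hlim : ∀ x : Y × I,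
      Tendsto (fun t => (f (S x.2 t x.1, x.2) - f x) / t) (𝓝[>] (0:ℝ)) (𝓝 (g x)))
    (hquot : ∃ δ > (0:ℝ), ∃ M, ∀ t ∈ Ioc (0:ℝ) δ, ∀ x : Y × I,
      |(f (S x.2 t x.1, x.2) - f x) / t| ≤ M) :
    ∀ x : Y × I, Gop S lam f x - Gop S lam (fun z => g z / lam z.1) x = f x :=
  G_resolvent_identity_general S hS_cont hS_zero hS_add lam hlam_cont lmin lmax hlmin hlam_bd f g
    hf_cont hf_bdd hg_cont hg_bdd hlim
end
end
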